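/- (Kramers degeneracy without eigenvectors) Let 𝓗 be a separable complex Hilbert space, H a bounded self-adjoint operator on 𝓗 which is not the zero operator, and T : 𝓗 → 𝓗 an antiunitary bijection. If T² = -I (fermion condition) and T∘H = H∘T (time reversal invariance), then the commutant is strictly contained in the double commutant: {H}' ≠ {H}'' (general degeneracy). -/

import Mathlib

open Polynomial
open scoped InnerProductSpace

section KramersAux

variable {𝓗 : Type*} [NormedAddCommGroup 𝓗] [InnerProductSpace ℂ 𝓗]
variable (H : 𝓗 →L[ℂ] 𝓗) (T : 𝓗 → 𝓗)

private lemma kd_norm_eq {x y : 𝓗} (h : ⟪x, x⟫_ℂ = ⟪y, y⟫_ℂ) : ‖x‖ = ‖y‖ := by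
  rw [inner_self_eq_norm_sq_to_K, inner_self_eq_norm_sq_to_K] at h
  have h2 : ‖x‖ ^ 2 = ‖y‖ ^ 2 := by exact_mod_cast h
  have hx := norm_nonneg x
  have hy := norm_nonneg y
  nlinarith [h2, hx, hy]

private lemma kd_pow_sa (hH_sa : ∀ φ ψ : 𝓗, ⟪H φ, ψ⟫_ℂ = ⟪φ, H ψ⟫_ℂ) :
    ∀ (n : ℕ) (x y : 𝓗), ⟪(H ^ n) x, y⟫_ℂ = ⟪x, (H ^ n) y⟫_ℂ := by
  intro n
  induction n with
  | zero => intro x y; simp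
  | succ n ih =>
    intro x y
    rw [pow_succ, ContinuousLinearMap.mul_apply, ContinuousLinearMap.mul_apply]
    calc ⟪(H ^ n) (H x), y⟫_ℂ = ⟪H x, (H ^ n) y⟫_ℂ := ih _ _
      _ = ⟪x, H ((H ^ n) y)⟫_ℂ := hH_sa _ _
      _ = ⟪x, (H ^ n) (H y)⟫_ℂ := by
          rw [← ContinuousLinearMap.mul_apply H (H ^ n), ← pow_succ', pow_succ,
            ContinuousLinearMap.mul_apply]

private lemma kd_aeval_monomial (n : ℕ) (a : ℂ) (x : 𝓗) :
    (aeval H ((monomial n) a)) x = a • (H ^ n) x := by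
  rw [aeval_monomial, ContinuousLinearMap.mul_apply, Algebra.algebraMap_eq_smul_one,
    ContinuousLinearMap.smul_apply, ContinuousLinearMap.one_apply]

private lemma kd_aeval_sa (hH_sa : ∀ φ ψ : 𝓗, ⟪H φ, ψ⟫_ℂ = ⟪φ, H ψ⟫_ℂ)
    (p : Polynomial ℂ) (x y : 𝓗) :
    ⟪(aeval H p) x, y⟫_ℂ = ⟪x, (aeval H (p.map (starRingEnd ℂ))) y⟫_ℂ := by
  induction p using Polynomial.induction_on' with
  | add p q hp hq =>
    rw [Polynomial.map_add, map_add, map_add, ContinuousLinearMap.add_apply,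
      ContinuousLinearMap.add_apply, inner_add_left, inner_add_right, hp, hq]
  | monomial n a =>
    rw [Polynomial.map_monomial, kd_aeval_monomial, kd_aeval_monomial,
      inner_smul_left, inner_smul_right, kd_pow_sa H hH_sa]

private lemma kd_pow_T (hTH : ∀ ψ : 𝓗, T (H ψ) = H (T ψ)) :
    ∀ (n : ℕ) (x : 𝓗), T ((H ^ n) x) = (H ^ n) (T x) := by
  intro n
  induction n with
  | zero => intro x; simp
  | succ n ih =>
    intro x
    rw [pow_succ, ContinuousLinearMap.mul_apply, ContinuousLinearMap.mul_apply, ih, hTH]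

private lemma kd_conj_conj (p : Polynomial ℂ) :
    (p.map (starRingEnd ℂ)).map (starRingEnd ℂ) = p := by
  rw [Polynomial.map_map]
  have h : (starRingEnd ℂ).comp (starRingEnd ℂ) = RingHom.id ℂ := by
    ext z; simp
  rw [h, Polynomial.map_id]

private lemma kd_aeval_T
    (hT_add : ∀ φ ψ : 𝓗, T (φ + ψ) = T φ + T ψ)
    (hT_smul : ∀ (c : ℂ) (ψ : 𝓗), T (c • ψ) = (starRingEnd ℂ c) • T ψ)
    (hTH : ∀ ψ : 𝓗, T (H ψ) = H (T ψ)) (p : Polynomial ℂ) (x : 𝓗) :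
    (aeval H p) (T x) = T ((aeval H (p.map (starRingEnd ℂ))) x) := by
  induction p using Polynomial.induction_on' with
  | add p q hp hq =>
    rw [Polynomial.map_add, map_add, map_add, ContinuousLinearMap.add_apply,
      ContinuousLinearMap.add_apply, hT_add, hp, hq]
  | monomial n a =>
    rw [Polynomial.map_monomial, kd_aeval_monomial, kd_aeval_monomial,
      hT_smul, kd_pow_T H T hTH]
    simp

private lemma kd_orth_mono
    (hH_sa : ∀ φ ψ : 𝓗, ⟪H φ, ψ⟫_ℂ = ⟪φ, H ψ⟫_ℂ)
    (hT_inner : ∀ φ ψ : 𝓗, ⟪T φ, T ψ⟫_ℂ = ⟪ψ, φ⟫_ℂ)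
    (hT_sq : ∀ ψ : 𝓗, T (T ψ) = -ψ)
    (hTH : ∀ ψ : 𝓗, T (H ψ) = H (T ψ)) (ψ : 𝓗) (n : ℕ) :
    ⟪T ψ, (H ^ n) ψ⟫_ℂ = 0 := by
  have h1 : (H ^ n) ψ = -(T (T ((H ^ n) ψ))) := by rw [hT_sq]; rw [neg_neg]
  have h2 : T ((H ^ n) ψ) = (H ^ n) (T ψ) := kd_pow_T H T hTH n ψ
  have key : ⟪T ψ, (H ^ n) ψ⟫_ℂ = -⟪T ψ, (H ^ n) ψ⟫_ℂ := by
    calc ⟪T ψ, (H ^ n) ψ⟫_ℂ = ⟪T ψ, -(T (T ((H ^ n) ψ)))⟫_ℂ := by rw [← h1]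
      _ = -⟪T ψ, T (T ((H ^ n) ψ))⟫_ℂ := by rw [inner_neg_right]
      _ = -⟪T ψ, T ((H ^ n) (T ψ))⟫_ℂ := by rw [h2]
      _ = -⟪(H ^ n) (T ψ), ψ⟫_ℂ := by rw [hT_inner]
      _ = -⟪T ψ, (H ^ n) ψ⟫_ℂ := by rw [kd_pow_sa H hH_sa]
  linear_combination key / 2

/-- `⟪Tψ, p(H) ψ⟫ = 0` for every polynomial `p`. -/
private lemma kd_orth_poly
    (hH_sa : ∀ φ ψ : 𝓗, ⟪H φ, ψ⟫_ℂ = ⟪φ, H ψ⟫_ℂ)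
    (hT_inner : ∀ φ ψ : 𝓗, ⟪T φ, T ψ⟫_ℂ = ⟪ψ, φ⟫_ℂ)
    (hT_sq : ∀ ψ : 𝓗, T (T ψ) = -ψ)
    (hTH : ∀ ψ : 𝓗, T (H ψ) = H (T ψ)) (ψ : 𝓗) (p : Polynomial ℂ) :
    ⟪T ψ, (aeval H p) ψ⟫_ℂ = 0 := by
  induction p using Polynomial.induction_on' with
  | add p q hp hq =>
    rw [map_add, ContinuousLinearMap.add_apply, inner_add_right, hp, hq, add_zero]
  | monomial n a =>
    rw [kd_aeval_monomial, inner_smul_right, kd_orth_mono H T hH_sa hT_inner hT_sq hTH,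
      mul_zero]

/-- `⟪p(H) ψ, q(H) Tψ⟫ = 0`. -/
private lemma kd_orth2
    (hT_add : ∀ φ ψ : 𝓗, T (φ + ψ) = T φ + T ψ)
    (hT_smul : ∀ (c : ℂ) (ψ : 𝓗), T (c • ψ) = (starRingEnd ℂ c) • T ψ)
    (hH_sa : ∀ φ ψ : 𝓗, ⟪H φ, ψ⟫_ℂ = ⟪φ, H ψ⟫_ℂ)
    (hT_inner : ∀ φ ψ : 𝓗, ⟪T φ, T ψ⟫_ℂ = ⟪ψ, φ⟫_ℂ)
    (hT_sq : ∀ ψ : 𝓗, T (T ψ) = -ψ)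
    (hTH : ∀ ψ : 𝓗, T (H ψ) = H (T ψ)) (ψ : 𝓗) (p q : Polynomial ℂ) :
    ⟪(aeval H p) ψ, (aeval H q) (T ψ)⟫_ℂ = 0 := by
  set r : Polynomial ℂ := p.map (starRingEnd ℂ) * q with hr
  have step1 : ⟪(aeval H p) ψ, (aeval H q) (T ψ)⟫_ℂ = ⟪ψ, (aeval H r) (T ψ)⟫_ℂ := by
    rw [kd_aeval_sa H hH_sa, hr, map_mul, ContinuousLinearMap.mul_apply]
  have step2 : (aeval H r) (T ψ) = T ((aeval H (r.map (starRingEnd ℂ))) ψ) :=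
    kd_aeval_T H T hT_add hT_smul hTH r ψ
  have hψw : ∀ w : 𝓗, ⟪ψ, T w⟫_ℂ = -(starRingEnd ℂ) ⟪T ψ, w⟫_ℂ := by
    intro w
    have hψ1 : ψ = -(T (T ψ)) := by rw [hT_sq]; rw [neg_neg]
    calc ⟪ψ, T w⟫_ℂ = ⟪-(T (T ψ)), T w⟫_ℂ := by rw [← hψ1]
      _ = -⟪T (T ψ), T w⟫_ℂ := by rw [inner_neg_left]
      _ = -⟪w, T ψ⟫_ℂ := by rw [hT_inner]
      _ = -(starRingEnd ℂ) ⟪T ψ, w⟫_ℂ := by rw [← inner_conj_symm]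
  rw [step1, step2, hψw,
    kd_orth_poly H T hH_sa hT_inner hT_sq hTH ψ (r.map (starRingEnd ℂ))]
  simp

/-- `‖q(H) (Tψ)‖ = ‖q(H) ψ‖`. -/
private lemma kd_norm_aeval
    (hT_add : ∀ φ ψ : 𝓗, T (φ + ψ) = T φ + T ψ)
    (hT_smul : ∀ (c : ℂ) (ψ : 𝓗), T (c • ψ) = (starRingEnd ℂ c) • T ψ)
    (hH_sa : ∀ φ ψ : 𝓗, ⟪H φ, ψ⟫_ℂ = ⟪φ, H ψ⟫_ℂ)
    (hT_inner : ∀ φ ψ : 𝓗, ⟪T φ, T ψ⟫_ℂ = ⟪ψ, φ⟫_ℂ)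
    (hTH : ∀ ψ : 𝓗, T (H ψ) = H (T ψ)) (ψ : 𝓗) (q : Polynomial ℂ) :
    ‖(aeval H q) (T ψ)‖ = ‖(aeval H q) ψ‖ := by
  have hnT : ∀ x : 𝓗, ‖T x‖ = ‖x‖ := fun x => kd_norm_eq (hT_inner x x)
  set qc : Polynomial ℂ := q.map (starRingEnd ℂ) with hqc
  have step1 : ‖(aeval H q) (T ψ)‖ = ‖(aeval H qc) ψ‖ := by
    rw [kd_aeval_T H T hT_add hT_smul hTH q ψ, hnT]
  rw [step1]
  apply kd_norm_eq
  have e1 : ⟪(aeval H qc) ψ, (aeval H qc) ψ⟫_ℂ = ⟪ψ, (aeval H (q * qc)) ψ⟫_ℂ := by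
    rw [kd_aeval_sa H hH_sa, hqc, kd_conj_conj, ← ContinuousLinearMap.mul_apply, ← map_mul]
  have e2 : ⟪(aeval H q) ψ, (aeval H q) ψ⟫_ℂ = ⟪ψ, (aeval H (qc * q)) ψ⟫_ℂ := by
    rw [kd_aeval_sa H hH_sa, ← ContinuousLinearMap.mul_apply, ← map_mul]
  rw [e1, e2, mul_comm]

/-- every element of the span of the `Hⁿ v` is `p(H) v`. -/
private lemma kd_span_poly (v : 𝓗) {x : 𝓗}
    (hx : x ∈ Submodule.span ℂ (Set.range fun n : ℕ => (H ^ n) v)) :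
    ∃ p : Polynomial ℂ, x = (aeval H p) v := by
  induction hx using Submodule.span_induction with
  | mem y hy =>
    obtain ⟨n, rfl⟩ := hy
    exact ⟨X ^ n, by rw [map_pow, aeval_X]⟩
  | zero => exact ⟨0, by rw [map_zero]; rfl⟩
  | add y z _ _ hy hz =>
    obtain ⟨p, rfl⟩ := hy
    obtain ⟨q, rfl⟩ := hz
    exact ⟨p + q, by rw [map_add, ContinuousLinearMap.add_apply]⟩
  | smul c y _ hy =>
    obtain ⟨p, rfl⟩ := hy
    exact ⟨c • p, by rw [map_smul, ContinuousLinearMap.smul_apply]⟩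

/-- the closed cyclic subspace generated by `v` is `H`-invariant. -/
private lemma kd_invariant (v : 𝓗) {x : 𝓗}
    (hx : x ∈ (Submodule.span ℂ (Set.range fun n : ℕ => (H ^ n) v)).topologicalClosure) :
    H x ∈ (Submodule.span ℂ (Set.range fun n : ℕ => (H ^ n) v)).topologicalClosure := by
  set S := Submodule.span ℂ (Set.range fun n : ℕ => (H ^ n) v) with hS
  set K := S.topologicalClosure with hK
  have hle : S.topologicalClosure ≤ Submodule.comap (H : 𝓗 →ₗ[ℂ] 𝓗) K := by
    apply Submodule.topologicalClosure_minimal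
    · rw [Submodule.span_le]
      rintro _ ⟨n, rfl⟩
      simp only [SetLike.mem_coe, Submodule.mem_comap, ContinuousLinearMap.coe_coe]
      have hcomm : H ((H ^ n) v) = (H ^ (n + 1)) v := by
        rw [pow_succ', ContinuousLinearMap.mul_apply]
      rw [hcomm]
      exact S.le_topologicalClosure (Submodule.subset_span ⟨n + 1, rfl⟩)
    · have hset : (↑(Submodule.comap (H : 𝓗 →ₗ[ℂ] 𝓗) K) : Set 𝓗) = ⇑H ⁻¹' ↑K := rfl
      rw [hset]
      exact (Submodule.isClosed_topologicalClosure S).preimage H.continuous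
  exact hle hx

end KramersAux

/-- The commutant of a bounded operator: all bounded operators commuting with it. -/
def commutant {𝓗 : Type*} [NormedAddCommGroup 𝓗] [InnerProductSpace ℂ 𝓗]
    (H : 𝓗 →L[ℂ] 𝓗) : Set (𝓗 →L[ℂ] 𝓗) :=
  {B | H ∘L B = B ∘L H}

/-- The double commutant of a bounded operator: all bounded operators commuting with
every element of the commutant. -/
def doubleCommutant {𝓗 : Type*} [NormedAddCommGroup 𝓗] [InnerProductSpace ℂ 𝓗]
    (H : 𝓗 →L[ℂ] 𝓗) : Set (𝓗 →L[ℂ] 𝓗) :=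
  {C | ∀ B ∈ commutant H, B ∘L C = C ∘L B}

section ProjComm

variable {𝓗 : Type*} [NormedAddCommGroup 𝓗] [InnerProductSpace ℂ 𝓗] [CompleteSpace 𝓗]

/-- the orthogonal projection onto a closed invariant subspace of a self-adjoint
operator belongs to the commutant. -/
private lemma kd_proj_commutant (H : 𝓗 →L[ℂ] 𝓗)
    (hH_sa : ∀ φ ψ : 𝓗, ⟪H φ, ψ⟫_ℂ = ⟪φ, H ψ⟫_ℂ)
    (K : Submodule ℂ 𝓗) [Submodule.HasOrthogonalProjection K]
    (hinv : ∀ x ∈ K, H x ∈ K) :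
    (K.subtypeL ∘L Submodule.orthogonalProjection K) ∈ commutant H := by
  show H ∘L (K.subtypeL ∘L Submodule.orthogonalProjection K)
      = (K.subtypeL ∘L Submodule.orthogonalProjection K) ∘L H
  ext x
  simp only [ContinuousLinearMap.comp_apply, Submodule.subtypeL_apply]
  set u : 𝓗 := ↑(Submodule.orthogonalProjection K x) with hu
  have hmemu : u ∈ K := (Submodule.orthogonalProjection K x).2
  have hw : x - u ∈ Kᗮ := Submodule.sub_starProjection_mem_orthogonal x
  have hHu : H u ∈ K := hinv u hmemu
  have hHw : H (x - u) ∈ Kᗮ := by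
    rw [Submodule.mem_orthogonal]
    intro z hz
    rw [← hH_sa]
    exact (Submodule.mem_orthogonal K (x - u)).mp hw (H z) (hinv z hz)
  have hx : H x = H u + H (x - u) := by rw [← map_add]; congr 1; abel
  rw [hx, map_add]
  have e1 : (Submodule.orthogonalProjection K (H u) : 𝓗) = H u :=
    Submodule.starProjection_eq_self_iff.mpr hHu
  have e2 : Submodule.orthogonalProjection K (H (x - u)) = 0 :=
    Submodule.orthogonalProjectionOnto_apply_of_mem_orthogonal hHw
  rw [Submodule.coe_add, e1, e2, Submodule.coe_zero, add_zero]

end ProjComm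

theorem kramers_degeneracy_without_eigenvectors
    {𝓗 : Type*} [NormedAddCommGroup 𝓗] [InnerProductSpace ℂ 𝓗] [CompleteSpace 𝓗]
    [TopologicalSpace.SeparableSpace 𝓗]
    (H : 𝓗 →L[ℂ] 𝓗) (hH_ne : H ≠ 0)
    (hH_sa : ∀ φ ψ : 𝓗, @inner ℂ _ _ (H φ) ψ = @inner ℂ _ _ φ (H ψ))
    (T : 𝓗 → 𝓗)
    (hT_bij : Function.Bijective T)
    (hT_add : ∀ φ ψ : 𝓗, T (φ + ψ) = T φ + T ψ)
    (hT_smul : ∀ (c : ℂ) (ψ : 𝓗), T (c • ψ) = (starRingEnd ℂ c) • T ψ)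
    (hT_inner : ∀ φ ψ : 𝓗, @inner ℂ _ _ (T φ) (T ψ) = @inner ℂ _ _ ψ φ)
    (hT_sq : ∀ ψ : 𝓗, T (T ψ) = -ψ)
    (hTH : ∀ ψ : 𝓗, T (H ψ) = H (T ψ)) :
    commutant H ≠ doubleCommutant H := by
  intro h
  -- pick a nonzero vector
  obtain ⟨ψ, hψH⟩ : ∃ ψ : 𝓗, H ψ ≠ 0 := by
    by_contra hall
    push_neg at hall
    exact hH_ne (ContinuousLinearMap.ext fun x => by simp [hall x])
  have hψ : ψ ≠ 0 := fun h0 => hψH (by simp [h0])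
  set χ : 𝓗 := ψ + T ψ with hχ
  set Sψ : Submodule ℂ 𝓗 := Submodule.span ℂ (Set.range fun n : ℕ => (H ^ n) ψ) with hSψ
  set Kψ : Submodule ℂ 𝓗 := Sψ.topologicalClosure with hKψ
  set Sχ : Submodule ℂ 𝓗 := Submodule.span ℂ (Set.range fun n : ℕ => (H ^ n) χ) with hSχ
  set Kχ : Submodule ℂ 𝓗 := Sχ.topologicalClosure with hKχ
  haveI : CompleteSpace Kψ := (Submodule.isClosed_topologicalClosure Sψ).completeSpace_coe
  haveI : CompleteSpace Kχ := (Submodule.isClosed_topologicalClosure Sχ).completeSpace_coe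
  set P : 𝓗 →L[ℂ] 𝓗 := Kψ.subtypeL ∘L Submodule.orthogonalProjection Kψ with hP
  set R : 𝓗 →L[ℂ] 𝓗 := Kχ.subtypeL ∘L Submodule.orthogonalProjection Kχ with hR
  have hPmem : P ∈ commutant H :=
    kd_proj_commutant H hH_sa Kψ (fun x hx => kd_invariant H ψ hx)
  have hRmem : R ∈ commutant H :=
    kd_proj_commutant H hH_sa Kχ (fun x hx => kd_invariant H χ hx)
  have hRdc : R ∈ doubleCommutant H := h ▸ hRmem
  have hPR : P ∘L R = R ∘L P := hRdc P hPmem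
  -- basic facts about P
  have hψK : ψ ∈ Kψ :=
    Sψ.le_topologicalClosure (Submodule.subset_span ⟨0, by simp⟩)
  have hχK : χ ∈ Kχ :=
    Sχ.le_topologicalClosure (Submodule.subset_span ⟨0, by simp⟩)
  have hTψperp : T ψ ∈ Kψᗮ := by
    rw [Submodule.mem_orthogonal]
    intro u hu
    have hker : Kψ ≤ LinearMap.ker (innerSL ℂ (T ψ) : 𝓗 →ₗ[ℂ] ℂ) := by
      apply Submodule.topologicalClosure_minimal
      · rw [Submodule.span_le]
        rintro _ ⟨n, rfl⟩
        simp only [SetLike.mem_coe, LinearMap.mem_ker]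
        exact kd_orth_mono H T hH_sa hT_inner hT_sq hTH ψ n
      · exact ContinuousLinearMap.isClosed_ker _
    have h0 : ⟪T ψ, u⟫_ℂ = 0 := hker hu
    rw [← inner_conj_symm, h0, map_zero]
  have hPψ : P ψ = ψ := by
    simp only [hP, ContinuousLinearMap.comp_apply, Submodule.subtypeL_apply]
    exact Submodule.starProjection_eq_self_iff.mpr hψK
  have hPTψ : P (T ψ) = 0 := by
    simp only [hP, ContinuousLinearMap.comp_apply, Submodule.subtypeL_apply]
    rw [Submodule.orthogonalProjectionOnto_apply_of_mem_orthogonal hTψperp]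
    rfl
  have hRχ : R χ = χ := by
    simp only [hR, ContinuousLinearMap.comp_apply, Submodule.subtypeL_apply]
    exact Submodule.starProjection_eq_self_iff.mpr hχK
  -- ψ ∈ Kχ
  have hRψ : R ψ = ψ := by
    have := congrArg (fun f : 𝓗 →L[ℂ] 𝓗 => f χ) hPR
    simp only [ContinuousLinearMap.comp_apply] at this
    rw [hRχ] at this
    have hPχ : P χ = ψ := by rw [hχ, map_add, hPψ, hPTψ, add_zero]
    rw [hPχ] at this
    exact this.symm
  have hψKχ : ψ ∈ Kχ := by
    have : (Submodule.orthogonalProjection Kχ ψ : 𝓗) = ψ := by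
      have := hRψ
      simpa only [hR, ContinuousLinearMap.comp_apply, Submodule.subtypeL_apply] using this
    exact Submodule.starProjection_eq_self_iff.mp this
  -- final estimate
  have hclos : ψ ∈ closure (Sχ : Set 𝓗) := by
    rw [← Submodule.topologicalClosure_coe]
    exact hψKχ
  have hbound : ∀ ε : ℝ, 0 < ε → ‖ψ‖ ≤ 2 * ε := by
    intro ε hε
    obtain ⟨y, hySχ, hdist⟩ := Metric.mem_closure_iff.mp hclos ε hε
    obtain ⟨q, rfl⟩ := kd_span_poly H χ hySχ
    set a : 𝓗 := (aeval H q) ψ with ha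
    set b : 𝓗 := (aeval H q) (T ψ) with hb
    have hy : (aeval H q) χ = a + b := by rw [hχ]; exact map_add _ _ _
    have horthab : ⟪ψ - a, b⟫_ℂ = 0 := by
      rw [inner_sub_left]
      have h1 : ⟪ψ, b⟫_ℂ = 0 := by
        have := kd_orth2 H T hT_add hT_smul hH_sa hT_inner hT_sq hTH ψ 1 q
        simpa using this
      have h2 : ⟪a, b⟫_ℂ = 0 :=
        kd_orth2 H T hT_add hT_smul hH_sa hT_inner hT_sq hTH ψ q q
      rw [h1, h2, sub_zero]
    have hsplit : ψ - (aeval H q) χ = (ψ - a) - b := by rw [hy]; abel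
    have hpyth : ‖ψ - (aeval H q) χ‖ ^ 2 = ‖ψ - a‖ ^ 2 + ‖b‖ ^ 2 := by
      rw [hsplit, norm_sub_sq (𝕜 := ℂ), horthab]
      simp
    have hd : ‖ψ - (aeval H q) χ‖ < ε := by
      rw [← dist_eq_norm]; exact hdist
    have hnn1 := norm_nonneg (ψ - a)
    have hnn2 := norm_nonneg b
    have hnn3 := norm_nonneg (ψ - (aeval H q) χ)
    have h3 : ‖ψ - a‖ ≤ ‖ψ - (aeval H q) χ‖ := by nlinarith
    have h4 : ‖b‖ ≤ ‖ψ - (aeval H q) χ‖ := by nlinarith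
    have h5 : ‖a‖ = ‖b‖ :=
      (kd_norm_aeval H T hT_add hT_smul hH_sa hT_inner hTH ψ q).symm
    have h6 : ‖ψ‖ ≤ ‖ψ - a‖ + ‖a‖ := by
      calc ‖ψ‖ = ‖(ψ - a) + a‖ := by rw [sub_add_cancel]
        _ ≤ ‖ψ - a‖ + ‖a‖ := norm_add_le _ _
    linarith
  have hzero : ‖ψ‖ ≤ 0 := by
    by_contra hc
    push_neg at hc
    have := hbound (‖ψ‖ / 4) (by linarith)
    linarith
  exact hψ (norm_le_zero_iff.mp hzero)
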